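/- arXiv:2507.15549 — 2 statements merged into one kernel-verified Lean document; each statement's English description precedes it below -/
import Mathlib

section
/- Let a > 0, let b be uniform on [0,1], and consider the family of random circles centered at the origin with radii x_i = e^{a(i-1+b)} for i = 1, 2, …. For any two real numbers 1 ≤ d_u ≤ d_v, the expected sum of the radii of all circles x_i with d_u < x_i < d_v equals (d_v − d_u)/a. -/
open MeasureTheory ENNReal

/-- With `b` uniform on `[0,1]` and random radii `x_i = e^{a(i-1+b)}` for
`i = 1, 2, …` (written below with index shifted, `i = 0, 1, …`), for any `1 ≤ d_u ≤ d_v`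
the expected sum of the radii lying strictly between `d_u` and `d_v` equals `(d_v - d_u)/a`. -/
theorem stmt1 (a : ℝ) (ha : 0 < a) (du dv : ℝ) (hdu : 1 ≤ du) (hduv : du ≤ dv) :
    ∫ b in Set.Icc (0 : ℝ) 1,
      (∑' i : ℕ, (Set.Ioo du dv).indicator (fun x => x) (Real.exp (a * ((i : ℝ) + b))))
      = (dv - du) / a := by
  have hdu0 : (0:ℝ) < du := lt_of_lt_of_le one_pos hdu
  have hdv0 : (0:ℝ) < dv := lt_of_lt_of_le hdu0 hduv
  set α : ℝ := Real.log du / a with hα_def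
  set β : ℝ := Real.log dv / a with hβ_def
  have hα0 : 0 ≤ α := div_nonneg (Real.log_nonneg hdu) ha.le
  have hαβ : α ≤ β := by
    rw [hα_def, hβ_def]
    exact div_le_div_of_nonneg_right (Real.log_le_log hdu0 hduv) ha.le
  set g : ℝ → ℝ := (Set.Ioo α β).indicator (fun s => Real.exp (a * s)) with hg_def
  have hmem : ∀ s : ℝ, Real.exp (a * s) ∈ Set.Ioo du dv ↔ s ∈ Set.Ioo α β := by
    intro s
    simp only [Set.mem_Ioo]
    rw [← Real.exp_log hdu0, ← Real.exp_log hdv0, Real.exp_lt_exp, Real.exp_lt_exp,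
      hα_def, hβ_def, div_lt_iff₀ ha, lt_div_iff₀ ha, mul_comm a s]
  have key : ∀ s : ℝ, (Set.Ioo du dv).indicator (fun x => x) (Real.exp (a * s)) = g s := by
    intro s
    rw [hg_def, Set.indicator_apply, Set.indicator_apply]
    by_cases h : s ∈ Set.Ioo α β
    · rw [if_pos ((hmem s).mpr h), if_pos h]
    · rw [if_neg (fun hh => h ((hmem s).mp hh)), if_neg h]
  have hg_meas : Measurable g :=
    ((Real.continuous_exp.comp (continuous_const.mul continuous_id)).measurable).indicator
      measurableSet_Ioo
  have hg_int : Integrable g := by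
    rw [hg_def, integrable_indicator_iff measurableSet_Ioo]
    exact (((Real.continuous_exp.comp (continuous_const.mul continuous_id)).continuousOn).integrableOn_Icc).mono_set
      Set.Ioo_subset_Icc_self
  -- the shifted functions
  set F : ℕ → ℝ → ℝ := fun i b => g ((i : ℝ) + b) with hF_def
  have hF_meas : ∀ i : ℕ, AEStronglyMeasurable (F i)
      (volume.restrict (Set.Icc (0:ℝ) 1)) := fun i =>
    (hg_meas.comp (measurable_const_add _)).aestronglyMeasurable
  set N : ℕ := ⌈β⌉₊ with hN_def
  have hFzero : ∀ i : ℕ, N ≤ i → ∀ b : ℝ, 0 ≤ b → F i b = 0 := by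
    intro i hi b hb
    apply Set.indicator_of_notMem
    intro hmem'
    have hβi : β ≤ (i : ℝ) := le_trans (Nat.le_ceil β) (Nat.cast_le.mpr hi)
    have := hmem'.2
    nlinarith
  have hf' : (∑' i : ℕ, ∫⁻ b in Set.Icc (0:ℝ) 1, ‖F i b‖₊) ≠ ⊤ := by
    have hz : ∀ i ∉ Finset.range N, (∫⁻ b in Set.Icc (0:ℝ) 1, ‖F i b‖₊) = 0 := by
      intro i hi
      have hi' : N ≤ i := by simpa using hi
      have : ∀ b ∈ Set.Icc (0:ℝ) 1, (‖F i b‖₊ : ℝ≥0∞) = 0 := by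
        intro b hb
        simp [hFzero i hi' b hb.1]
      rw [setLIntegral_congr_fun measurableSet_Icc this]
      simp
    rw [tsum_eq_sum hz]
    refine (ENNReal.sum_lt_top.mpr ?_).ne
    intro i _
    have hb : ∀ b : ℝ, (‖F i b‖₊ : ℝ≥0∞) ≤ ENNReal.ofReal dv := by
      intro b
      rw [show (‖F i b‖₊ : ℝ≥0∞) = ENNReal.ofReal ‖F i b‖ from (ofReal_norm _).symm]
      apply ENNReal.ofReal_le_ofReal
      rw [Real.norm_eq_abs]
      simp only [hF_def, hg_def]
      by_cases h : ((i:ℝ) + b) ∈ Set.Ioo α β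
      · rw [Set.indicator_of_mem h]
        rw [abs_of_nonneg (Real.exp_nonneg _)]
        have : a * ((i:ℝ) + b) < a * β := by
          have := h.2; nlinarith
        have hβ' : a * β = Real.log dv := by rw [hβ_def]; field_simp [ha.ne']
        calc Real.exp (a * ((i:ℝ)+b)) ≤ Real.exp (a * β) := Real.exp_le_exp.mpr this.le
          _ = dv := by rw [hβ', Real.exp_log hdv0]
      · rw [Set.indicator_of_notMem h]; simpa using hdv0.le
    calc (∫⁻ b in Set.Icc (0:ℝ) 1, ‖F i b‖₊) ≤ ∫⁻ _ in Set.Icc (0:ℝ) 1, ENNReal.ofReal dv :=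
          lintegral_mono fun b => hb b
      _ = ENNReal.ofReal dv * volume (Set.Icc (0:ℝ) 1) := by rw [setLIntegral_const]
      _ < ⊤ := by simp [Real.volume_Icc]
  -- swap
  simp only [key]
  rw [show (fun b => ∑' i : ℕ, g ((i:ℝ) + b)) = fun b => ∑' i : ℕ, F i b from rfl]
  rw [MeasureTheory.integral_tsum hF_meas hf']
  -- each term is an interval integral
  have hterm : ∀ i : ℕ, (∫ b in Set.Icc (0:ℝ) 1, F i b) = ∫ s in (i:ℝ)..((i:ℝ)+1), g s := by
    intro i
    rw [MeasureTheory.integral_Icc_eq_integral_Ioc,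
      ← intervalIntegral.integral_of_le (by norm_num : (0:ℝ) ≤ 1)]
    rw [hF_def]
    simpa using intervalIntegral.integral_comp_add_left g (i : ℝ)
  simp only [hterm]
  -- sum up the interval integrals
  have hint : ∀ i : ℕ, IntervalIntegrable g volume (i : ℝ) ((i:ℝ)+1) :=
    fun i => hg_int.intervalIntegrable
  have hpartial : ∀ n : ℕ, (∑ i ∈ Finset.range n, ∫ s in (i:ℝ)..((i:ℝ)+1), g s)
      = ∫ s in (0:ℝ)..(n:ℝ), g s := by
    intro n
    have := intervalIntegral.sum_integral_adjacent_intervals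
      (a := fun k : ℕ => (k : ℝ)) (n := n) (f := g) (μ := volume)
      (fun k _ => by simpa using hint k)
    simpa using this
  have htendsto : Filter.Tendsto (fun n : ℕ => ∫ s in (0:ℝ)..(n:ℝ), g s)
      Filter.atTop (nhds (∫ s in Set.Ioi (0:ℝ), g s)) :=
    MeasureTheory.intervalIntegral_tendsto_integral_Ioi 0 hg_int.integrableOn
      tendsto_natCast_atTop_atTop
  have hterm0 : ∀ i ∉ Finset.range N, (∫ s in (i:ℝ)..((i:ℝ)+1), g s) = 0 := by
    intro i hi
    have hi' : N ≤ i := by simpa using hi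
    have hβi : β ≤ (i : ℝ) := le_trans (Nat.le_ceil β) (Nat.cast_le.mpr hi')
    have : Set.EqOn g 0 (Set.uIcc (i:ℝ) ((i:ℝ)+1)) := by
      intro s hs
      rw [Set.uIcc_of_le (by linarith)] at hs
      apply Set.indicator_of_notMem
      intro hmem'
      have := hmem'.2
      have := hs.1
      nlinarith
    rw [intervalIntegral.integral_congr this]
    simp
  have hsummable : Summable (fun i : ℕ => ∫ s in (i:ℝ)..((i:ℝ)+1), g s) :=
    summable_of_ne_finset_zero hterm0
  have heq : (∑' i : ℕ, ∫ s in (i:ℝ)..((i:ℝ)+1), g s) = ∫ s in Set.Ioi (0:ℝ), g s := by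
    refine tendsto_nhds_unique (hsummable.hasSum.tendsto_sum_nat) ?_
    simpa only [hpartial] using htendsto
  rw [heq]
  -- compute the improper integral
  rw [hg_def, MeasureTheory.setIntegral_indicator measurableSet_Ioo]
  have hss : Set.Ioi (0:ℝ) ∩ Set.Ioo α β = Set.Ioo α β := by
    apply Set.inter_eq_self_of_subset_right
    intro s hs
    exact lt_of_le_of_lt hα0 hs.1
  rw [hss]
  rw [← MeasureTheory.integral_Ioc_eq_integral_Ioo,
    ← intervalIntegral.integral_of_le hαβ]
  have hsub : (∫ s in α..β, Real.exp (a * s)) = (Real.exp (a*β) - Real.exp (a*α)) / a := by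
    have := intervalIntegral.mul_integral_comp_mul_left (a := α) (b := β) (c := a)
      (f := fun x => Real.exp x)
    rw [_root_.integral_exp] at this
    field_simp at this ⊢
    try linarith
  rw [hsub]
  have h1 : a * β = Real.log dv := by rw [hβ_def]; field_simp [ha.ne']
  have h2 : a * α = Real.log du := by rw [hα_def]; field_simp [ha.ne']
  rw [h1, h2, Real.exp_log hdv0, Real.exp_log hdu0]
end

section
/- The number of directed outerplanar multigraphs (with at most one arc per ordered vertex pair) on a fixed cyclic sequence of K boundary vertices is at most 4^{5K}. -/
namespace Stmt4

open Fin.NatCast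

variable {K : ℕ}

def Lo (G : Finset (Fin K × Fin K)) : Prop := ∀ p ∈ G, p.1 < p.2

def NC (G : Finset (Fin K × Fin K)) : Prop :=
  ∀ p ∈ G, ∀ q ∈ G, p.1 < q.1 → q.1 < p.2 → p.2 < q.2 → False

def oG (G : Finset (Fin K × Fin K)) (i : Fin K) : ℕ :=
  (G.filter fun p => p.1 = i).card

def cG (G : Finset (Fin K × Fin K)) (i : Fin K) : ℕ :=
  (G.filter fun p => p.2 = i).card

lemma upclosed_aux {S U V : Finset (Fin K)}
    (hU : U ⊆ S) (hV : V ⊆ S)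
    (hUu : ∀ x ∈ U, ∀ y ∈ S, x < y → y ∈ U)
    (hVu : ∀ x ∈ V, ∀ y ∈ S, x < y → y ∈ V)
    (hc : U.card = V.card)
    {x : Fin K} (hxV : x ∈ V) (hxU : x ∉ U) : False := by
  have hsub : U ⊆ V.erase x := by
    intro y hy
    rcases lt_trichotomy y x with h | h | h
    · exact absurd (hUu y hy x (hV hxV) h) hxU
    · exact absurd (h ▸ hy) hxU
    · exact Finset.mem_erase.mpr ⟨ne_of_gt h, hVu x hxV y (hU hy) h⟩
  have h1 := Finset.card_le_card hsub
  have h2 : 0 < V.card := Finset.card_pos.mpr ⟨x, hxV⟩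
  rw [Finset.card_erase_of_mem hxV] at h1
  omega

lemma upclosed_eq {S T T' : Finset (Fin K)}
    (hT : T ⊆ S) (hT' : T' ⊆ S)
    (hTu : ∀ x ∈ T, ∀ y ∈ S, x < y → y ∈ T)
    (hT'u : ∀ x ∈ T', ∀ y ∈ S, x < y → y ∈ T')
    (hcard : T.card = T'.card) : T = T' := by
  ext x
  constructor
  · intro hx
    by_contra hx'
    exact upclosed_aux hT' hT hT'u hTu hcard.symm hx hx'
  · intro hx
    by_contra hx'
    exact upclosed_aux hT hT' hTu hT'u hcard hx hx'


def Tb (G : Finset (Fin K × Fin K)) (b : Fin K) : Finset (Fin K) :=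
  (G.filter fun p => p.2 = b).image Prod.fst

def Sb (G : Finset (Fin K × Fin K)) (b : Fin K) : Finset (Fin K) :=
  Finset.univ.filter (fun a => a < b ∧ oG G a ≠ 0)

lemma mem_Tb {G : Finset (Fin K × Fin K)} {b a : Fin K} :
    a ∈ Tb G b ↔ (a, b) ∈ G := by
  simp only [Tb, Finset.mem_image, Finset.mem_filter]
  constructor
  · rintro ⟨p, ⟨hp, h2⟩, h1⟩
    exact (Prod.ext_iff.mpr ⟨h1, h2⟩ : p = (a,b)) ▸ hp
  · intro h; exact ⟨(a, b), ⟨h, rfl⟩, rfl⟩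

lemma sum_cG (G : Finset (Fin K × Fin K)) : ∑ i, cG G i = G.card :=
  (Finset.card_eq_sum_card_fiberwise (f := Prod.snd) (t := Finset.univ)
    (fun x _ => Finset.mem_univ _)).symm

lemma Tb_subset {G : Finset (Fin K × Fin K)} {b : Fin K} (hLo : Lo G) :
    Tb G b ⊆ Sb G b := by
  intro a ha
  rw [mem_Tb] at ha
  refine Finset.mem_filter.mpr ⟨Finset.mem_univ _, hLo _ ha, ?_⟩
  have : (a, b) ∈ G.filter fun p => p.1 = a := Finset.mem_filter.mpr ⟨ha, rfl⟩
  exact Finset.card_ne_zero_of_mem this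

lemma Tb_card (G : Finset (Fin K × Fin K)) (b : Fin K) :
    (Tb G b).card = cG G b := by
  apply Finset.card_image_of_injOn
  intro p hp q hq h
  simp only [Finset.coe_filter, Set.mem_setOf_eq] at hp hq
  exact Prod.ext_iff.mpr ⟨h, hp.2.trans hq.2.symm⟩

lemma Tb_upclosed {G : Finset (Fin K × Fin K)} {b : Fin K}
    (hNC : NC G) (hbmin : ∀ i, cG G i ≠ 0 → b ≤ i) :
    ∀ x ∈ Tb G b, ∀ y ∈ Sb G b, x < y → y ∈ Tb G b := by
  intro x hx y hy hxy
  rw [mem_Tb] at hx ⊢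
  rw [Sb, Finset.mem_filter] at hy
  obtain ⟨-, hyb, hyo⟩ := hy
  obtain ⟨q, hq⟩ := (Finset.card_ne_zero.mp hyo).exists_mem
  rw [Finset.mem_filter] at hq
  obtain ⟨hqG, hq1⟩ := hq
  have hq2 : b ≤ q.2 := by
    apply hbmin
    exact Finset.card_ne_zero_of_mem (Finset.mem_filter.mpr ⟨hqG, rfl⟩)
  rcases eq_or_lt_of_le hq2 with h | h
  · exact (Prod.ext_iff.mpr ⟨hq1, h.symm⟩ : q = (y, b)) ▸ hqG
  · exact absurd (hNC (x, b) hx q hqG (hq1 ▸ hxy) (hq1 ▸ hyb) h) not_false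

namespace Part2
open Finset

lemma filter_snd_eq (G : Finset (Fin K × Fin K)) (a b : Fin K) :
    ((G.filter fun p => p.1 = a).filter fun p => p.2 = b).card
      = if a ∈ Tb G b then 1 else 0 := by
  rw [Finset.filter_filter]
  by_cases h : a ∈ Tb G b
  · rw [if_pos h]
    rw [mem_Tb] at h
    have e : (G.filter fun p => p.1 = a ∧ p.2 = b) = {(a, b)} := by
      ext p
      simp only [Finset.mem_filter, Finset.mem_singleton]
      constructor
      · rintro ⟨_, h1, h2⟩; exact Prod.ext_iff.mpr ⟨h1, h2⟩
      · rintro rfl; exact ⟨h, rfl, rfl⟩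
    rw [e, Finset.card_singleton]
  · rw [if_neg h, Finset.card_eq_zero, mem_Tb] at *
    ext p
    simp only [Finset.mem_filter, Finset.notMem_empty, iff_false]
    rintro ⟨hp, h1, h2⟩
    exact h ((Prod.ext_iff.mpr ⟨h1, h2⟩ : p = (a, b)) ▸ hp)

lemma oG_rem (G : Finset (Fin K × Fin K)) (b a : Fin K) :
    (if a ∈ Tb G b then 1 else 0) + oG (G.filter fun p => ¬ p.2 = b) a = oG G a := by
  unfold oG
  have h := Finset.card_filter_add_card_filter_not
    (s := G.filter fun p => p.1 = a) (p := fun p => p.2 = b)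
  rw [filter_snd_eq] at h
  rw [← h]
  congr 1
  rw [Finset.filter_comm]

lemma cG_rem (G : Finset (Fin K × Fin K)) (b i : Fin K) :
    cG (G.filter fun p => ¬ p.2 = b) i = if i = b then 0 else cG G i := by
  unfold cG
  rw [Finset.filter_filter]
  by_cases h : i = b
  · subst h
    rw [if_pos rfl, Finset.card_eq_zero]
    ext p
    simp only [Finset.mem_filter, Finset.notMem_empty, iff_false]
    rintro ⟨_, h1, h2⟩
    exact h1 h2
  · rw [if_neg h]
    congr 1
    apply Finset.filter_congr
    intro p _
    constructor
    · rintro ⟨_, h2⟩; exact h2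
    · intro h2; exact ⟨fun hb => h (h2 ▸ hb ▸ rfl), h2⟩

theorem eq_of_oc : ∀ (n : ℕ) (G G' : Finset (Fin K × Fin K)), G.card ≤ n →
    Lo G → NC G → Lo G' → NC G' → oG G = oG G' → cG G = cG G' → G = G' := by
  intro n
  induction n with
  | zero =>
    intro G G' hc _ _ _ _ _ hcg
    have hG : G = ∅ := Finset.card_eq_zero.mp (Nat.le_zero.mp hc)
    have hG' : G'.card = 0 := by
      rw [← sum_cG, ← hcg, sum_cG, hG, Finset.card_empty]
    rw [hG, Finset.card_eq_zero.mp hG']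
  | succ n ih =>
    intro G G' hc hLo hNC hLo' hNC' hoG hcG
    by_cases hG0 : G.card = 0
    · have hG : G = ∅ := Finset.card_eq_zero.mp hG0
      have hG' : G'.card = 0 := by
        rw [← sum_cG, ← hcG, sum_cG, hG, Finset.card_empty]
      rw [hG, Finset.card_eq_zero.mp hG']
    · obtain ⟨p0, hp0⟩ := Finset.card_ne_zero.mp hG0
      have hBne : (Finset.univ.filter (fun i : Fin K => cG G i ≠ 0)).Nonempty :=
        ⟨p0.2, Finset.mem_filter.mpr ⟨Finset.mem_univ _,
          Finset.card_ne_zero_of_mem (Finset.mem_filter.mpr ⟨hp0, rfl⟩)⟩⟩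
      set b := (Finset.univ.filter (fun i : Fin K => cG G i ≠ 0)).min' hBne with hbdef
      have hbmin : ∀ i, cG G i ≠ 0 → b ≤ i := by
        intro i hi
        exact Finset.min'_le _ i (Finset.mem_filter.mpr ⟨Finset.mem_univ _, hi⟩)
      have hbmem : cG G b ≠ 0 := by
        have := Finset.min'_mem _ hBne
        rw [← hbdef] at this
        exact (Finset.mem_filter.mp this).2
      have hbmin' : ∀ i, cG G' i ≠ 0 → b ≤ i := fun i hi =>
        hbmin i (by rw [hcG]; exact hi)
      have hSeq : Sb G b = Sb G' b := by
        simp only [Sb, hoG]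
      have hTT : Tb G b = Tb G' b :=
        upclosed_eq (Tb_subset hLo) (by rw [hSeq]; exact Tb_subset hLo')
          (Tb_upclosed hNC hbmin)
          (by rw [hSeq]; exact Tb_upclosed hNC' hbmin')
          (by rw [Tb_card, Tb_card, hcG])
      have hLo2 : Lo (G.filter fun p => ¬ p.2 = b) :=
        fun p hp => hLo p (Finset.filter_subset _ _ hp)
      have hNC2 : NC (G.filter fun p => ¬ p.2 = b) :=
        fun p hp q hq => hNC p (Finset.filter_subset _ _ hp) q (Finset.filter_subset _ _ hq)
      have hLo2' : Lo (G'.filter fun p => ¬ p.2 = b) :=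
        fun p hp => hLo' p (Finset.filter_subset _ _ hp)
      have hNC2' : NC (G'.filter fun p => ¬ p.2 = b) :=
        fun p hp q hq => hNC' p (Finset.filter_subset _ _ hp) q (Finset.filter_subset _ _ hq)
      have hcard2 : (G.filter fun p => ¬ p.2 = b).card < G.card := by
        apply Finset.card_lt_card
        rw [Finset.filter_ssubset]
        obtain ⟨q, hq⟩ := Finset.card_ne_zero.mp hbmem
        rw [Finset.mem_filter] at hq
        exact ⟨q, hq.1, by simp [hq.2]⟩
      have hoG2 : oG (G.filter fun p => ¬ p.2 = b) = oG (G'.filter fun p => ¬ p.2 = b) := by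
        funext a
        have e1 := oG_rem G b a
        have e2 := oG_rem G' b a
        rw [hTT] at e1
        have e3 : oG G a = oG G' a := congrFun hoG a
        omega
      have hcG2 : cG (G.filter fun p => ¬ p.2 = b) = cG (G'.filter fun p => ¬ p.2 = b) := by
        funext i
        rw [cG_rem, cG_rem, hcG]
      have hG2 : (G.filter fun p => ¬ p.2 = b) = (G'.filter fun p => ¬ p.2 = b) :=
        ih _ _ (by omega) hLo2 hNC2 hLo2' hNC2' hoG2 hcG2
      have hfil : ∀ (H : Finset (Fin K × Fin K)),
          H.filter (fun p => p.2 = b) = (Tb H b).image (fun a => (a, b)) := by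
        intro H
        ext p
        simp only [Finset.mem_filter, Finset.mem_image, mem_Tb]
        constructor
        · rintro ⟨hp, h2⟩
          exact ⟨p.1, (Prod.ext_iff.mpr ⟨rfl, h2⟩ : p = (p.1, b)) ▸ hp,
            (Prod.ext_iff.mpr ⟨rfl, h2⟩ : p = (p.1, b)).symm⟩
        · rintro ⟨a, haG, rfl⟩
          exact ⟨haG, rfl⟩
      calc G = G.filter (fun p => p.2 = b) ∪ G.filter (fun p => ¬ p.2 = b) :=
              (Finset.filter_union_filter_not_eq _ G).symm
        _ = G'.filter (fun p => p.2 = b) ∪ G'.filter (fun p => ¬ p.2 = b) := by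
              rw [hfil G, hfil G', hTT, hG2]
        _ = G' := Finset.filter_union_filter_not_eq _ G'

end Part2

def cnt (G : Finset (Fin K × Fin K)) (l r : ℕ) : ℕ :=
  (G.filter fun p => l ≤ p.1.1 ∧ p.2.1 ≤ r).card

lemma cnt_degen {G : Finset (Fin K × Fin K)} (hLo : Lo G) {l r : ℕ} (h : r ≤ l) :
    cnt G l r = 0 := by
  rw [cnt, Finset.card_eq_zero, Finset.filter_eq_empty_iff]
  rintro p hp ⟨h1, h2⟩
  have := hLo p hp
  rw [Fin.lt_def] at this
  omega

lemma split_noncross {G : Finset (Fin K × Fin K)} (hNC : NC G)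
    {e p : Fin K × Fin K} (he : e ∈ G) (hp : p ∈ G)
    (hl : e.1.1 < p.1.1) : p.2.1 ≤ e.2.1 ∨ e.2.1 ≤ p.1.1 := by
  by_contra h
  push_neg at h
  exact hNC e he p hp (Fin.lt_def.mpr hl) (Fin.lt_def.mpr h.2) (Fin.lt_def.mpr h.1)

lemma interval_bound {G : Finset (Fin K × Fin K)} (hLo : Lo G) (hNC : NC G) :
    ∀ (d l r : ℕ), r - l ≤ d → l < r → cnt G l r ≤ 2 * (r - l) - 1 := by
  intro d
  induction d using Nat.strong_induction_on with
  | _ d ih =>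
  intro l r hd hlr
  by_cases hF : (G.filter fun p => p.1.1 = l ∧ p.2.1 ≤ r) = ∅
  · -- no edge starting at l within range
    have hsub : cnt G l r ≤ cnt G (l + 1) r := by
      apply Finset.card_le_card
      intro p hp
      rw [Finset.mem_filter] at hp ⊢
      refine ⟨hp.1, ?_, hp.2.2⟩
      have : ¬ (p.1.1 = l ∧ p.2.1 ≤ r) := by
        intro h
        rw [Finset.filter_eq_empty_iff] at hF
        exact hF hp.1 h
      omega
    rcases Nat.lt_or_ge (l + 1) r with h | h
    · have := ih (r - (l + 1)) (by omega) (l + 1) r le_rfl h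
      omega
    · have := cnt_degen (G := G) hLo (l := l + 1) (r := r) h
      omega
  · -- m := max second coordinate of edges from l within range
    have hFne : (G.filter fun p => p.1.1 = l ∧ p.2.1 ≤ r).Nonempty :=
      Finset.nonempty_iff_ne_empty.mpr hF
    set F := G.filter fun p => p.1.1 = l ∧ p.2.1 ≤ r with hFdef
    have hMne : (F.image fun p => p.2.1).Nonempty := hFne.image _
    set m := (F.image fun p => p.2.1).max' hMne with hmdef
    obtain ⟨e, heF, hem⟩ : ∃ e ∈ F, e.2.1 = m := by
      have := (F.image fun p => p.2.1).max'_mem hMne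
      rw [← hmdef, Finset.mem_image] at this
      obtain ⟨e, he, h2⟩ := this
      exact ⟨e, he, h2⟩
    rw [hFdef, Finset.mem_filter] at heF
    obtain ⟨heG, he1, he2⟩ := heF
    have hlm : l < m := by
      have := hLo e heG
      rw [Fin.lt_def] at this
      omega
    have hmr : m ≤ r := hem ▸ he2
    have hmax : ∀ p ∈ G, p.1.1 = l → p.2.1 ≤ r → p.2.1 ≤ m := by
      intro p hp h1 h2
      apply Finset.le_max'
      rw [Finset.mem_image]
      exact ⟨p, by rw [hFdef, Finset.mem_filter]; exact ⟨hp, h1, h2⟩, rfl⟩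
    rcases Nat.lt_or_ge m r with hmlt | hmge
    · -- m < r : split at m
      have hsub : cnt G l r ≤ cnt G l m + cnt G m r := by
        refine le_trans (Finset.card_le_card ?_) (Finset.card_union_le _ _)
        intro p hp
        rw [Finset.mem_filter] at hp
        obtain ⟨hpG, hp1, hp2⟩ := hp
        rw [Finset.mem_union, Finset.mem_filter, Finset.mem_filter]
        rcases Nat.eq_or_lt_of_le hp1 with h | h
        · exact Or.inl ⟨hpG, hp1, hmax p hpG h.symm hp2⟩
        · rcases split_noncross hNC heG hpG (by omega) with h2 | h2
          · exact Or.inl ⟨hpG, hp1, by omega⟩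
          · exact Or.inr ⟨hpG, by omega, hp2⟩
      have b1 := ih (m - l) (by omega) l m le_rfl hlm
      have b2 := ih (r - m) (by omega) m r le_rfl hmlt
      omega
    · -- m = r, so (l, r) ∈ G
      have hmr' : m = r := le_antisymm hmr hmge
      by_cases hF2 : (G.filter fun p => p.1.1 = l ∧ p.2.1 < r) = ∅
      · -- only edge from l in range is (l, r)
        have hsub : cnt G l r ≤ (cnt G (l + 1) r) + 1 := by
          have hs : (G.filter fun p => l ≤ p.1.1 ∧ p.2.1 ≤ r) ⊆
              insert e (G.filter fun p => l + 1 ≤ p.1.1 ∧ p.2.1 ≤ r) := by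
            intro p hp
            rw [Finset.mem_filter] at hp
            obtain ⟨hpG, hp1, hp2⟩ := hp
            rw [Finset.mem_insert, Finset.mem_filter]
            rcases Nat.eq_or_lt_of_le hp1 with h | h
            · left
              have hp2r : p.2.1 = r := by
                have : ¬ (p.1.1 = l ∧ p.2.1 < r) := by
                  intro hcon
                  rw [Finset.filter_eq_empty_iff] at hF2
                  exact hF2 hpG hcon
                omega
              have he2r : e.2.1 = r := by omega
              apply Prod.ext_iff.mpr
              constructor
              · exact Fin.val_injective (by omega)
              · exact Fin.val_injective (by omega)
            · right; exact ⟨hpG, by omega, hp2⟩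
          calc cnt G l r ≤ (insert e (G.filter fun p => l + 1 ≤ p.1.1 ∧ p.2.1 ≤ r)).card :=
                Finset.card_le_card hs
            _ ≤ (cnt G (l + 1) r) + 1 := Finset.card_insert_le _ _
        rcases Nat.lt_or_ge (l + 1) r with h | h
        · have := ih (r - (l + 1)) (by omega) (l + 1) r le_rfl h
          omega
        · have := cnt_degen (G := G) hLo (l := l + 1) (r := r) h
          omega
      · -- second maximum m2
        have hF2ne : (G.filter fun p => p.1.1 = l ∧ p.2.1 < r).Nonempty :=
          Finset.nonempty_iff_ne_empty.mpr hF2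
        set F2 := G.filter fun p => p.1.1 = l ∧ p.2.1 < r with hF2def
        have hM2ne : (F2.image fun p => p.2.1).Nonempty := hF2ne.image _
        set m2 := (F2.image fun p => p.2.1).max' hM2ne with hm2def
        obtain ⟨f, hfF, hfm⟩ : ∃ f ∈ F2, f.2.1 = m2 := by
          have := (F2.image fun p => p.2.1).max'_mem hM2ne
          rw [← hm2def, Finset.mem_image] at this
          obtain ⟨f, hf, h2⟩ := this
          exact ⟨f, hf, h2⟩
        rw [hF2def, Finset.mem_filter] at hfF
        obtain ⟨hfG, hf1, hf2⟩ := hfF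
        have hlm2 : l < m2 := by
          have := hLo f hfG
          rw [Fin.lt_def] at this
          omega
        have hm2r : m2 < r := hfm ▸ hf2
        have hmax2 : ∀ p ∈ G, p.1.1 = l → p.2.1 < r → p.2.1 ≤ m2 := by
          intro p hp h1 h2
          apply Finset.le_max'
          rw [Finset.mem_image]
          exact ⟨p, by rw [hF2def, Finset.mem_filter]; exact ⟨hp, h1, h2⟩, rfl⟩
        have hsub : cnt G l r ≤ (cnt G l m2 + cnt G m2 r) + 1 := by
          have hs : (G.filter fun p => l ≤ p.1.1 ∧ p.2.1 ≤ r) ⊆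
              insert e ((G.filter fun p => l ≤ p.1.1 ∧ p.2.1 ≤ m2) ∪
                (G.filter fun p => m2 ≤ p.1.1 ∧ p.2.1 ≤ r)) := by
            intro p hp
            rw [Finset.mem_filter] at hp
            obtain ⟨hpG, hp1, hp2⟩ := hp
            rw [Finset.mem_insert, Finset.mem_union, Finset.mem_filter, Finset.mem_filter]
            rcases Nat.eq_or_lt_of_le hp1 with h | h
            · rcases Nat.lt_or_ge p.2.1 r with h2 | h2
              · exact Or.inr (Or.inl ⟨hpG, hp1, hmax2 p hpG h.symm h2⟩)
              · left
                have he2r : e.2.1 = r := by omega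
                apply Prod.ext_iff.mpr
                constructor
                · exact Fin.val_injective (by omega)
                · exact Fin.val_injective (by omega)
            · rcases split_noncross hNC hfG hpG (by omega) with h2 | h2
              · exact Or.inr (Or.inl ⟨hpG, hp1, by omega⟩)
              · exact Or.inr (Or.inr ⟨hpG, by omega, hp2⟩)
          calc cnt G l r ≤ _ := Finset.card_le_card hs
            _ ≤ ((G.filter fun p => l ≤ p.1.1 ∧ p.2.1 ≤ m2) ∪
                (G.filter fun p => m2 ≤ p.1.1 ∧ p.2.1 ≤ r)).card + 1 :=
                Finset.card_insert_le _ _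
            _ ≤ (cnt G l m2 + cnt G m2 r) + 1 :=
                Nat.add_le_add_right (Finset.card_union_le _ _) 1
        have b1 := ih (m2 - l) (by omega) l m2 le_rfl hlm2
        have b2 := ih (r - m2) (by omega) m2 r le_rfl hm2r
        omega

lemma card_le {G : Finset (Fin K × Fin K)} (hLo : Lo G) (hNC : NC G) (hK : 2 ≤ K) :
    G.card ≤ 2 * K := by
  have h : G = G.filter fun p => 0 ≤ p.1.1 ∧ p.2.1 ≤ K - 1 := by
    rw [eq_comm, Finset.filter_eq_self]
    intro p _
    exact ⟨Nat.zero_le _, by have := p.2.isLt; omega⟩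
  have := interval_bound hLo hNC (K - 1) 0 (K - 1) le_rfl (by omega)
  rw [cnt, ← h] at this
  omega
  
def psum (c : Fin K → ℕ) (i : Fin K) : ℕ :=
  i.1 + ∑ j ∈ Finset.univ.filter (· ≤ i), c j

lemma psum_strictMono (c : Fin K → ℕ) : StrictMono (psum c) := by
  intro i j hij
  have h1 : (Finset.univ.filter (· ≤ i)) ⊆ (Finset.univ.filter (· ≤ j)) := by
    intro x hx
    rw [Finset.mem_filter] at hx ⊢
    exact ⟨hx.1, le_trans hx.2 (le_of_lt hij)⟩
  have h2 := Finset.sum_le_sum_of_subset (f := c) h1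
  have h3 : i.1 < j.1 := hij
  unfold psum
  omega

lemma psum_le (c : Fin K → ℕ) (i : Fin K) : psum c i ≤ i.1 + ∑ j, c j := by
  unfold psum
  have := Finset.sum_le_sum_of_subset (f := c) (Finset.filter_subset (· ≤ i) Finset.univ)
  omega

lemma psum_split (c : Fin K → ℕ) (i : Fin K) :
    psum c i = c i + (i.1 + ∑ j ∈ Finset.univ.filter (· < i), c j) := by
  have h : Finset.univ.filter (· ≤ i) = insert i (Finset.univ.filter (· < i)) := by
    ext j
    simp only [Finset.mem_filter, Finset.mem_univ, true_and, Finset.mem_insert]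
    rw [le_iff_lt_or_eq, or_comm]
  rw [psum, h, Finset.sum_insert (by simp)]
  omega

lemma psum_inj {c c' : Fin K → ℕ} (h : ∀ i, psum c i = psum c' i) : c = c' := by
  suffices hs : ∀ n (i : Fin K), i.1 = n → c i = c' i by
    funext i; exact hs i.1 i rfl
  intro n
  induction n using Nat.strong_induction_on with
  | _ n ih =>
  rintro i rfl
  have e1 := psum_split c i
  have e2 := psum_split c' i
  have hsum : ∑ j ∈ Finset.univ.filter (· < i), c j
      = ∑ j ∈ Finset.univ.filter (· < i), c' j := by
    apply Finset.sum_congr rfl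
    intro j hj
    rw [Finset.mem_filter] at hj
    exact ih j.1 hj.2 j rfl
  have := h i
  omega

/-- the standard stars-and-bars style injection -/
lemma enc1_inj [NeZero (3 * K)] {c c' : Fin K → ℕ} (hb : ∀ i, psum c i < 3 * K)
    (hb' : ∀ i, psum c' i < 3 * K)
    (h : (Finset.univ.image fun i => ((psum c i : ℕ) : Fin (3 * K)))
       = (Finset.univ.image fun i => ((psum c' i : ℕ) : Fin (3 * K)))) :
    c = c' := by
  set f : Fin K → Fin (3 * K) := fun i => ((psum c i : ℕ) : Fin (3 * K)) with hf
  set f' : Fin K → Fin (3 * K) := fun i => ((psum c' i : ℕ) : Fin (3 * K)) with hf'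
  have hfv : ∀ i, (f i).1 = psum c i := fun i => Fin.val_cast_of_lt (hb i)
  have hfv' : ∀ i, (f' i).1 = psum c' i := fun i => Fin.val_cast_of_lt (hb' i)
  have hmono : StrictMono f := by
    intro i j hij
    rw [Fin.lt_def, hfv, hfv]
    exact psum_strictMono c hij
  have hmono' : StrictMono f' := by
    intro i j hij
    rw [Fin.lt_def, hfv', hfv']
    exact psum_strictMono c' hij
  set s := Finset.univ.image f with hs
  have hcard : s.card = K := by
    rw [hs, Finset.card_image_of_injective _ hmono.injective, Finset.card_univ,
      Fintype.card_fin]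
  have h1 := Finset.orderEmbOfFin_unique hcard
    (f := f) (fun x => Finset.mem_image_of_mem _ (Finset.mem_univ x)) hmono
  have h2 := Finset.orderEmbOfFin_unique hcard
    (f := f') (fun x => by rw [h]; exact Finset.mem_image_of_mem _ (Finset.mem_univ x))
    hmono'
  have hff : f = f' := h1.trans h2.symm
  apply psum_inj
  intro i
  rw [← hfv, ← hfv', hff]

def key (p : Fin K × Fin K) : ℕ := p.2.1 + p.1.1 * K

lemma key_fst (p : Fin K × Fin K) : key p / K = p.1.1 := by
  have h2 := p.2.isLt
  rw [key, Nat.add_mul_div_right _ _ (by omega : 0 < K), Nat.div_eq_of_lt h2, Nat.zero_add]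

lemma key_snd (p : Fin K × Fin K) : key p % K = p.2.1 := by
  have h2 := p.2.isLt
  rw [key, Nat.add_mul_mod_self_right, Nat.mod_eq_of_lt h2]

lemma key_inj : Function.Injective (key (K := K)) := by
  intro p q h
  have h1 : p.1.1 = q.1.1 := by rw [← key_fst p, ← key_fst q, h]
  have h2 : p.2.1 = q.2.1 := by rw [← key_snd p, ← key_snd q, h]
  exact Prod.ext_iff.mpr ⟨Fin.val_injective h1, Fin.val_injective h2⟩


lemma sum_oG (G : Finset (Fin K × Fin K)) : ∑ i, oG G i = G.card :=
  (Finset.card_eq_sum_card_fiberwise (f := Prod.fst) (t := Finset.univ)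
    (fun x _ => Finset.mem_univ _)).symm

def enc1 [NeZero (3 * K)] (c : Fin K → ℕ) : Finset (Fin (3 * K)) :=
  Finset.univ.image fun i => ((psum c i : ℕ) : Fin (3 * K))

def wfun [NeZero K] (A : Fin K → Fin K → Bool) (G : Finset (Fin K × Fin K)) (n : ℕ) :
    Bool × Bool :=
  if h : n < ((G.image key).sort (· ≤ ·)).length then
    (A ↑((((G.image key).sort (· ≤ ·)).get ⟨n, h⟩) / K)
       ↑((((G.image key).sort (· ≤ ·)).get ⟨n, h⟩) % K),
     A ↑((((G.image key).sort (· ≤ ·)).get ⟨n, h⟩) % K)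
       ↑((((G.image key).sort (· ≤ ·)).get ⟨n, h⟩) / K))
  else (false, false)

lemma recover [NeZero K] {A A' : Fin K → Fin K → Bool} {G : Finset (Fin K × Fin K)}
    (hGle : G.card ≤ 2 * K)
    (hw : ∀ n < 2 * K, wfun A G n = wfun A' G n) :
    ∀ p ∈ G, A p.1 p.2 = A' p.1 p.2 ∧ A p.2 p.1 = A' p.2 p.1 := by
  intro p hp
  have hkmem : key p ∈ (G.image key).sort (· ≤ ·) := by
    rw [Finset.mem_sort]
    exact Finset.mem_image_of_mem _ hp
  obtain ⟨t, ht⟩ := List.mem_iff_get.mp hkmem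
  have hlen : ((G.image key).sort (· ≤ ·)).length ≤ 2 * K := by
    rw [Finset.length_sort, Finset.card_image_of_injective _ key_inj]
    exact hGle
  have h := hw t.1 (lt_of_lt_of_le t.isLt hlen)
  unfold wfun at h
  rw [dif_pos t.isLt, dif_pos t.isLt] at h
  simp only [Fin.eta] at h
  rw [ht, key_fst, key_snd] at h
  simp only [Fin.cast_val_eq_self] at h
  rw [Prod.mk.injEq] at h
  exact h

end Stmt4


open Stmt4 in
/-- The number of directed outerplanar multigraphs (at most one arc per ordered
vertex pair, no loops, no two arcs crossing with respect to the fixed cyclic boundary order)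
on `K` boundary vertices is at most `4^{5K}`. -/
theorem stmt4 (K : ℕ) (hK : 2 ≤ K) :
    Fintype.card {A : Fin K → Fin K → Bool //
      (∀ i, A i i = false) ∧
      (∀ a b c d : Fin K, a < c → c < b → b < d →
        (A a b = true ∨ A b a = true) → (A c d = true ∨ A d c = true) → False)}
    ≤ 4 ^ (5 * K) := by
  classical
  haveI : NeZero K := ⟨by omega⟩
  haveI : NeZero (3 * K) := ⟨by omega⟩
  set P := fun A : Fin K → Fin K → Bool =>
      (∀ i, A i i = false) ∧
      (∀ a b c d : Fin K, a < c → c < b → b < d →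
        (A a b = true ∨ A b a = true) → (A c d = true ∨ A d c = true) → False) with hP
  set GA : (Fin K → Fin K → Bool) → Finset (Fin K × Fin K) := fun A =>
    Finset.univ.filter (fun p => p.1 < p.2 ∧ (A p.1 p.2 = true ∨ A p.2 p.1 = true)) with hGA
  have memGA : ∀ A (p : Fin K × Fin K),
      p ∈ GA A ↔ (p.1 < p.2 ∧ (A p.1 p.2 = true ∨ A p.2 p.1 = true)) := by
    intro A p
    rw [hGA]
    simp [Finset.mem_filter]
  have hLoA : ∀ A, Lo (GA A) := by
    intro A p hp
    exact ((memGA A p).mp hp).1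
  have hNCA : ∀ A, P A → NC (GA A) := by
    intro A hA p hp q hq h1 h2 h3
    exact hA.2 p.1 p.2 q.1 q.2 h1 h2 h3 ((memGA A p).mp hp).2 ((memGA A q).mp hq).2
  have hcardA : ∀ A, P A → (GA A).card ≤ 2 * K := by
    intro A hA
    exact card_le (hLoA A) (hNCA A hA) hK
  have hpsum_lt : ∀ (G : Finset (Fin K × Fin K)), G.card ≤ 2 * K →
      (∀ i, psum (cG G) i < 3 * K) ∧ (∀ i, psum (oG G) i < 3 * K) := by
    intro G hG
    have hc := sum_cG G
    have ho := sum_oG G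
    constructor
    · intro i
      have := psum_le (cG G) i
      have hi := i.isLt
      omega
    · intro i
      have := psum_le (oG G) i
      have hi := i.isLt
      omega
  -- the injective encoding
  have hinj : Function.Injective
      (fun x : {A : Fin K → Fin K → Bool // P A} =>
        ((enc1 (cG (GA x.1)), enc1 (oG (GA x.1)),
          fun t : Fin (2 * K) => wfun x.1 (GA x.1) t.1) :
          Finset (Fin (3 * K)) × Finset (Fin (3 * K)) × (Fin (2 * K) → Bool × Bool))) := by
    rintro ⟨A, hA⟩ ⟨A', hA'⟩ h
    simp only [Prod.mk.injEq] at h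
    obtain ⟨h1, h2, h3⟩ := h
    have hb := hpsum_lt (GA A) (hcardA A hA)
    have hb' := hpsum_lt (GA A') (hcardA A' hA')
    have hceq : cG (GA A) = cG (GA A') := enc1_inj hb.1 hb'.1 h1
    have hoeq : oG (GA A) = oG (GA A') := enc1_inj hb.2 hb'.2 h2
    have hGG : GA A = GA A' :=
      Part2.eq_of_oc (GA A).card (GA A) (GA A') le_rfl (hLoA A) (hNCA A hA)
        (hLoA A') (hNCA A' hA') hoeq hceq
    have hw : ∀ n < 2 * K, wfun A (GA A) n = wfun A' (GA A) n := by
      intro n hn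
      have := congrFun h3 ⟨n, hn⟩
      simp only at this
      rw [hGG]
      rw [hGG] at this
      exact this
    have hrec := recover (hGG ▸ hcardA A hA) hw
    apply Subtype.ext
    funext i j
    rcases lt_trichotomy i j with hij | rfl | hij
    · by_cases hm : (i, j) ∈ GA A
      · exact (hrec (i, j) hm).1
      · have hI : A i j = false := by
          rcases Bool.eq_false_or_eq_true (A i j) with h | h
          · exact absurd ((memGA A (i, j)).mpr ⟨hij, Or.inl h⟩) hm
          · exact h
        have hI' : A' i j = false := by
          rcases Bool.eq_false_or_eq_true (A' i j) with h | h
          · exact absurd ((memGA A' (i, j)).mpr ⟨hij, Or.inl h⟩) (hGG ▸ hm)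
          · exact h
        exact hI.trans hI'.symm
    · exact (hA.1 i).trans (hA'.1 i).symm
    · by_cases hm : (j, i) ∈ GA A
      · exact (hrec (j, i) hm).2
      · have hI : A i j = false := by
          rcases Bool.eq_false_or_eq_true (A i j) with h | h
          · exact absurd ((memGA A (j, i)).mpr ⟨hij, Or.inr h⟩) hm
          · exact h
        have hI' : A' i j = false := by
          rcases Bool.eq_false_or_eq_true (A' i j) with h | h
          · exact absurd ((memGA A' (j, i)).mpr ⟨hij, Or.inr h⟩) (hGG ▸ hm)
          · exact h
        exact hI.trans hI'.symm
  have hle := Fintype.card_le_of_injective _ hinj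
  refine le_trans hle ?_
  rw [Fintype.card_prod, Fintype.card_prod, Fintype.card_finset, Fintype.card_fun,
    Fintype.card_prod, Fintype.card_bool, Fintype.card_fin, Fintype.card_fin]
  have e : (2:ℕ) ^ (3 * K) * (2 ^ (3 * K) * (2 * 2) ^ (2 * K)) = 4 ^ (5 * K) := by
    have h4 : (2:ℕ) * 2 = 2 ^ 2 := rfl
    have h4' : (4:ℕ) = 2 ^ 2 := rfl
    rw [h4, h4', ← pow_mul, ← pow_mul, ← pow_add, ← pow_add]
    congr 1
    ring
  rw [e]
end
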